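/- arXiv:2211.06504 — 2 statements merged into one kernel-verified Lean document; each statement's English description precedes it below -/
import Mathlib

section
/- For every positive integer a, ∫₀¹ ((ax))((x))⁹ dx = (1280 - 2112a² + 1056a⁴ - 264a⁶ + 55a⁸)/(168960a⁹). -/
/-!
On each interval `(k/a, (k+1)/a)` the integrand is the polynomial `(a x - k - 1/2) (x - 1/2)^9`,
so the integral is a sum of `a` polynomial integrals. Summation by parts in `k` reduces that sum
to the power sum `∑_{k<a} (k/a - 1/2)^10`, which the Bernoulli polynomial `B₁₁` evaluates via
`B₁₁(x + 1) - B₁₁(x) = 11 x^10`.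
-/

open Real

/-- The sawtooth (first Bernoulli) function `((x))`. -/
noncomputable def saw (x : ℝ) : ℝ := if Int.fract x = 0 then 0 else Int.fract x - 1/2

open Set Finset MeasureTheory intervalIntegral

theorem saw_of_mem_Ioo {k : ℤ} {x : ℝ} (hx : x ∈ Ioo (k : ℝ) (k + 1)) :
    saw x = x - k - 1 / 2 := by
  have hfloor : ⌊x⌋ = k := Int.floor_eq_iff.2 ⟨hx.1.le, hx.2⟩
  have hfract : Int.fract x = x - k := by rw [Int.fract, hfloor]
  rw [saw, hfract, if_neg (sub_ne_zero.2 hx.1.ne')]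

theorem integral_eq_sum_of_eqOn_uIoo {E : Type*} [NormedAddCommGroup E] [NormedSpace ℝ E]
    {μ : Measure ℝ} [NullSingletonClass μ] {f : ℝ → E} {g : ℕ → ℝ → E} {t : ℕ → ℝ} {n : ℕ}
    (hg : ∀ k < n, IntervalIntegrable (g k) μ (t k) (t (k + 1)))
    (hfg : ∀ k < n, EqOn f (g k) (uIoo (t k) (t (k + 1)))) :
    ∫ x in t 0..t n, f x ∂μ = ∑ k ∈ range n, ∫ x in t k..t (k + 1), g k x ∂μ := by
  rw [← sum_integral_adjacent_intervals fun k hk => (hg k hk).congr_uIoo (hfg k hk).symm]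
  exact sum_congr rfl fun k hk => integral_congr_uIoo (hfg k (mem_range.1 hk))

theorem integral_linear_mul_pow (α β c p q : ℝ) (n : ℕ) :
    ∫ x in p..q, (α * (x - c) + β) * (x - c) ^ n =
      α / (n + 2) * ((q - c) ^ (n + 2) - (p - c) ^ (n + 2)) +
        β / (n + 1) * ((q - c) ^ (n + 1) - (p - c) ^ (n + 1)) := by
  have h : ∀ x : ℝ, (α * (x - c) + β) * (x - c) ^ n = α * (x - c) ^ (n + 1) + β * (x - c) ^ n :=
    fun x => by ring
  simp_rw [h]
  rw [intervalIntegral.integral_add ((by fun_prop : Continuous _).intervalIntegrable _ _)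
      ((by fun_prop : Continuous _).intervalIntegrable _ _),
    intervalIntegral.integral_const_mul, intervalIntegral.integral_const_mul,
    integral_comp_sub_right (fun x => x ^ (n + 1)), integral_comp_sub_right (fun x => x ^ n),
    integral_pow, integral_pow]
  push_cast
  ring

theorem sum_range_sub_mul_sub (c : ℝ) (F : ℕ → ℝ) (n : ℕ) :
    ∑ k ∈ range n, (c - k) * (F (k + 1) - F k) =
      (c + 1 - n) * F n - (c + 1) * F 0 + ∑ k ∈ range n, F k := by
  induction n with
  | zero => simp
  | succ n ih => rw [sum_range_succ, ih, sum_range_succ]; push_cast; ring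

theorem saw_mul_saw_pow_eqOn {a k : ℕ} (hk : k < a) (n : ℕ) :
    EqOn (fun x => saw (a * x) * saw x ^ n)
      (fun x => (a * (x - 1 / 2) + ((a - 1) / 2 - k)) * (x - 1 / 2) ^ n)
      (Ioo (k / a) ((k + 1 : ℕ) / a)) := by
  rintro x ⟨hlo, hhi⟩
  have ha : (0 : ℝ) < a := by exact_mod_cast k.zero_le.trans_lt hk
  have hka : (k : ℝ) + 1 ≤ a := by exact_mod_cast hk
  rw [div_lt_iff₀' ha] at hlo
  rw [lt_div_iff₀' ha, Nat.cast_succ] at hhi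
  have h0 : 0 < x := pos_of_mul_pos_right (k.cast_nonneg.trans_lt hlo) ha.le
  have h1 : x < 1 := by nlinarith
  have hax := saw_of_mem_Ioo (k := k) (x := a * x) (by push_cast; exact ⟨hlo, hhi⟩)
  have hx' := saw_of_mem_Ioo (k := 0) (x := x) (by simpa using ⟨h0, h1⟩)
  simp only [hax, hx']
  push_cast
  ring

theorem integral_saw_mul_saw_pow {a : ℕ} (ha : 0 < a) (n : ℕ) :
    ∫ x in (0 : ℝ)..1, saw (a * x) * saw x ^ n =
      a / (n + 2) * ((1 / 2) ^ (n + 2) - (-1 / 2) ^ (n + 2)) +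
        ((1 - a) / 2 * (1 / 2) ^ (n + 1) - (a + 1) / 2 * (-1 / 2) ^ (n + 1) +
          ∑ k ∈ range a, ((k : ℝ) / a - 1 / 2) ^ (n + 1)) / (n + 1) := by
  set t : ℕ → ℝ := fun k => k / a
  have ha' : (a : ℝ) ≠ 0 := by positivity
  have ht0 : t 0 = 0 := by simp [t]
  have hta : t a = 1 := div_self ha'
  rw [← ht0, ← hta, integral_eq_sum_of_eqOn_uIoo
    (g := fun k x => (a * (x - 1 / 2) + ((a - 1) / 2 - k)) * (x - 1 / 2) ^ n)
    (fun k _ => (by fun_prop : Continuous _).intervalIntegrable _ _)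
    (fun k hk => by
      rw [uIoo_of_le (by simp only [t]; gcongr; simp)]
      exact saw_mul_saw_pow_eqOn hk n)]
  simp_rw [integral_linear_mul_pow]
  calc _ = a / (n + 2) * ∑ k ∈ range a, ((t (k + 1) - 1 / 2) ^ (n + 2) - (t k - 1 / 2) ^ (n + 2))
        + 1 / (n + 1) * ∑ k ∈ range a, ((a - 1) / 2 - k) *
            ((t (k + 1) - 1 / 2) ^ (n + 1) - (t k - 1 / 2) ^ (n + 1)) := by
        rw [mul_sum, mul_sum, ← sum_add_distrib]
        exact sum_congr rfl fun k _ => by ring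
    _ = _ := by
        rw [sum_range_sub (fun k => (t k - 1 / 2) ^ (n + 2)),
          sum_range_sub_mul_sub _ (fun k => (t k - 1 / 2) ^ (n + 1)), hta, ht0]
        ring

/-- The Bernoulli polynomial `B₁₁`. -/
noncomputable def bernoulli₁₁ (x : ℝ) : ℝ :=
  x ^ 11 - 11 / 2 * x ^ 10 + 55 / 6 * x ^ 9 - 11 * x ^ 7 + 11 * x ^ 5 - 11 / 2 * x ^ 3 + 5 / 6 * x

theorem sum_range_add_pow_ten (n : ℕ) (t : ℝ) :
    ∑ k ∈ range n, ((k : ℝ) + t) ^ 10 = (bernoulli₁₁ (n + t) - bernoulli₁₁ t) / 11 := by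
  have h : ∀ k : ℕ, ((k : ℝ) + t) ^ 10 =
      (bernoulli₁₁ ((k + 1 : ℕ) + t) - bernoulli₁₁ (k + t)) / 11 := fun k => by
    simp only [bernoulli₁₁]; push_cast; ring
  simp_rw [h, ← sum_div]
  rw [sum_range_sub (fun k : ℕ => bernoulli₁₁ (k + t))]
  simp

theorem franel_a1x9 (a : ℕ) (ha : 0 < a) :
    ∫ x in (0:ℝ)..1, saw (a * x) * (saw x)^9 =
      (1280 - 2112 * (a:ℝ)^2 + 1056 * (a:ℝ)^4 - 264 * (a:ℝ)^6 + 55 * (a:ℝ)^8) /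
        (168960 * (a:ℝ)^9) := by
  have ha' : (a : ℝ) ≠ 0 := by positivity
  have hsum : ∑ k ∈ range a, ((k : ℝ) / a - 1 / 2) ^ (9 + 1) =
      (∑ k ∈ range a, ((k : ℝ) + -(a / 2)) ^ 10) / (a : ℝ) ^ 10 := by
    rw [sum_div]
    refine sum_congr rfl fun k _ => ?_
    rw [← div_pow]
    congr 1
    field_simp
    ring
  rw [integral_saw_mul_saw_pow ha 9, hsum, sum_range_add_pow_ten]
  simp only [bernoulli₁₁]
  field_simp
  ring
end

section
/- For every positive integer a, ∫₀¹ ((ax))((x))¹¹ dx = (-353792 + 582400a² - 288288a⁴ + 68640a⁶ - 10010a⁸ + 1365a¹⁰)/(16773120a¹¹). -/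
/-!
On `(k/a, (k+1)/a)` the function `saw (a x)` is linear, equal to `a x - k - 1/2`, and on `(0, 1)`
we have `saw x = x - 1/2`. If `G' = g` and `H' = G`, then `(a x - k - 1/2) G x - a H x` is an
antiderivative of `(a x - k - 1/2) g x`, so the pieces add up to a trapezoidal sum of `G` at the
points `k/a` minus the telescoped term `a (H 1 - H 0)`. For `g x = (x - 1/2)^11` the trapezoidal
sum is the power sum `∑ (2k - a)^12`, whose closed form is proved by induction from `a` to `a + 2`.
-/

open Real

open MeasureTheory intervalIntegral Finset Set

theorem saw_eq_of_mem_Ioo {x : ℝ} {k : ℤ} (hx : x ∈ Ioo (k : ℝ) (k + 1)) :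
    saw x = x - k - 1 / 2 := by
  have hfract : Int.fract x = x - k := by
    rw [Int.fract, Int.floor_eq_iff.mpr ⟨hx.1.le, hx.2⟩]
  rw [saw, hfract, if_neg (sub_ne_zero.mpr hx.1.ne')]

theorem saw_mul_eq_of_mem_Ioo {c x : ℝ} (hc : 0 < c) {k : ℤ}
    (hx : x ∈ Ioo (k / c) ((k + 1) / c)) : saw (c * x) = c * x - k - 1 / 2 :=
  saw_eq_of_mem_Ioo ⟨(div_lt_iff₀' hc).mp hx.1, (lt_div_iff₀' hc).mp hx.2⟩

section Pieces

variable {g G H : ℝ → ℝ} {c : ℝ}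

theorem eqOn_saw_mul_mul (hc : 0 < c) (k : ℤ) :
    EqOn (fun x => (c * x - k - 1 / 2) * g x) (fun x => saw (c * x) * g x)
      (Ioo (k / c) ((k + 1) / c)) :=
  fun x hx => by simp only [saw_mul_eq_of_mem_Ioo hc hx]

theorem intervalIntegrable_saw_mul_mul (hg : Continuous g) (hc : 0 < c) (k : ℤ) :
    IntervalIntegrable (fun x => saw (c * x) * g x) volume (k / c) ((k + 1) / c) := by
  have hle : (k : ℝ) / c ≤ (k + 1) / c := by gcongr; linarith
  have hcont : Continuous fun x => (c * x - k - 1 / 2) * g x := by fun_prop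
  refine (hcont.intervalIntegrable _ _).congr_uIoo ?_
  rw [uIoo_of_le hle]
  exact eqOn_saw_mul_mul hc k

theorem integral_saw_mul_mul (hG : ∀ x, HasDerivAt G (g x) x) (hH : ∀ x, HasDerivAt H (G x) x)
    (hg : Continuous g) (hc : 0 < c) (k : ℤ) :
    ∫ x in k / c..(k + 1) / c, saw (c * x) * g x =
      (G (k / c) + G ((k + 1) / c)) / 2 - c * (H ((k + 1) / c) - H (k / c)) := by
  have hle : (k : ℝ) / c ≤ (k + 1) / c := by gcongr; linarith
  have hF : ∀ x, HasDerivAt (fun x => (c * x - k - 1 / 2) * G x - c * H x)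
      ((c * x - k - 1 / 2) * g x) x := fun x => by
    have h := (((((hasDerivAt_id x).const_mul c).sub_const (k : ℝ)).sub_const (1 / 2)).fun_mul
      (hG x)).fun_sub ((hH x).const_mul c)
    exact h.congr_deriv (by simp only [id]; ring)
  rw [← integral_congr_Ioo_of_le hle (eqOn_saw_mul_mul hc k),
    integral_eq_sub_of_hasDerivAt (fun x _ => hF x)
      (Continuous.intervalIntegrable (by fun_prop) _ _)]
  field_simp
  ring

end Pieces

theorem integral_saw_nat_mul_mul {g G H : ℝ → ℝ} (hG : ∀ x, HasDerivAt G (g x) x)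
    (hH : ∀ x, HasDerivAt H (G x) x) (hg : Continuous g) {a : ℕ} (ha : 0 < a) :
    ∫ x in (0 : ℝ)..1, saw (a * x) * g x =
      (∑ k ∈ range a, (G (k / a) + G ((k + 1) / a))) / 2 - a * (H 1 - H 0) := by
  have ha' : (0 : ℝ) < a := by exact_mod_cast ha
  have hsplit := sum_integral_adjacent_intervals (a := fun k : ℕ => (k : ℝ) / a) (n := a)
    fun k _ => by simpa using intervalIntegrable_saw_mul_mul hg ha' k
  simp only [Nat.cast_zero, zero_div, div_self ha'.ne', Nat.cast_succ] at hsplit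
  rw [← hsplit]
  have hpiece : ∀ k : ℕ, ∫ x in (k : ℝ) / a..(k + 1) / a, saw (a * x) * g x =
      (G (k / a) + G ((k + 1) / a)) / 2 - a * (H ((k + 1) / a) - H (k / a)) := fun k => by
    simpa using integral_saw_mul_mul hG hH hg ha' k
  simp only [hpiece]
  rw [sum_sub_distrib, ← mul_sum, sum_div]
  have htel := sum_range_sub (fun k : ℕ => H (k / a)) a
  simp only [Nat.cast_succ, Nat.cast_zero, zero_div, div_self ha'.ne'] at htel
  rw [htel]

theorem sum_range_two_mul_sub_pow_twelve (a : ℕ) :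
    ∑ k ∈ range a, ((2 * k - a : ℝ) ^ 12 + (2 * k + 2 - a) ^ 12) =
      2 / 13 * (a : ℝ) ^ 13 + 8 * (a : ℝ) ^ 11 - 176 / 3 * (a : ℝ) ^ 9 + 2816 / 7 * (a : ℝ) ^ 7
        - 8448 / 5 * (a : ℝ) ^ 5 + 10240 / 3 * (a : ℝ) ^ 3 - 2830336 / 1365 * (a : ℝ) := by
  induction a using Nat.twoStepInduction with
  | zero => simp
  | one => norm_num
  | more n ih _ =>
    have hshift : ∀ k : ℕ,
        (2 * (k + 1 : ℕ) - (n + 2 : ℕ) : ℝ) ^ 12 + (2 * (k + 1 : ℕ) + 2 - (n + 2 : ℕ)) ^ 12 =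
          (2 * k - n : ℝ) ^ 12 + (2 * k + 2 - n) ^ 12 := fun k => by push_cast; ring
    rw [sum_range_succ', sum_range_succ]
    simp only [hshift, ih]
    push_cast
    ring

theorem franel_a1x11 (a : ℕ) (ha : 0 < a) :
    ∫ x in (0:ℝ)..1, saw (a * x) * (saw x)^11 =
      (-353792 + 582400 * (a:ℝ)^2 - 288288 * (a:ℝ)^4 + 68640 * (a:ℝ)^6
        - 10010 * (a:ℝ)^8 + 1365 * (a:ℝ)^10) / (16773120 * (a:ℝ)^11) := by
  have ha' : (0 : ℝ) < a := by exact_mod_cast ha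
  have hsaw : EqOn (fun x => saw (a * x) * (x - 1 / 2) ^ 11) (fun x => saw (a * x) * saw x ^ 11)
      (Ioo 0 1) := fun x hx => by
    simp only [saw_eq_of_mem_Ioo (k := 0) (by simpa using hx), Int.cast_zero, sub_zero]
  have hG : ∀ x : ℝ, HasDerivAt (fun x => (x - 1 / 2) ^ 12 / 12) ((x - 1 / 2) ^ 11) x := fun x =>
    ((((hasDerivAt_id x).sub_const (1 / 2 : ℝ)).fun_pow 12).div_const 12).congr_deriv
      (by simp only [id]; ring)
  have hH : ∀ x : ℝ, HasDerivAt (fun x => (x - 1 / 2) ^ 13 / 156) ((x - 1 / 2) ^ 12 / 12) x :=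
    fun x => ((((hasDerivAt_id x).sub_const (1 / 2 : ℝ)).fun_pow 13).div_const 156).congr_deriv
      (by simp only [id]; ring)
  rw [← integral_congr_Ioo_of_le zero_le_one hsaw,
    integral_saw_nat_mul_mul hG hH (by fun_prop) ha]
  have hsum :
      ∑ k ∈ range a, (((k : ℝ) / a - 1 / 2) ^ 12 / 12 + (((k : ℝ) + 1) / a - 1 / 2) ^ 12 / 12) =
        (∑ k ∈ range a, ((2 * k - a : ℝ) ^ 12 + (2 * k + 2 - a) ^ 12)) /
          (12 * (2 * (a : ℝ)) ^ 12) := by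
    rw [sum_div]
    exact sum_congr rfl fun k _ => by field_simp
  rw [hsum, sum_range_two_mul_sub_pow_twelve]
  field_simp
  ring
end
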